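/- Let φ_N be a solution of the N-periodic Riccati system and define its discrete Fourier transform \hat{φ}_N^k(t) := Σ_{j=0}^{N−1} φ_N^j(t) exp(−2π√(−1) jk / N) for k = 0,1,…,N−1 and t ∈ [0,T]. Then for each k, the ℂ-valued function t ↦ \hat{φ}_N^k(t) satisfies the scalar Riccati equation (d/dt)\hat{φ}_N^k(t) = (\hat{φ}_N^k(t))² − (1 − e^{−2π√(−1)k/N}) ε on [0,T] with terminal condition \hat{φ}_N^k(T) = (1 − e^{−2π√(−1)k/N}) c. -/

import Mathlib

open scoped BigOperators

/-- The sequence ε^i with integer index. -/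
noncomputable def epsZ (ε : ℝ) : ℤ → ℝ := fun i => if i = 0 then ε else if i = 1 then -ε else 0

/-- `φ` is a solution of the `N`-periodic Riccati system on `[0,T]`. -/
def IsPerRiccatiSol (T ε c : ℝ) (N : ℕ) (φ : ℤ → ℝ → ℝ) : Prop :=
  (∀ i : ℤ, φ (i + (N : ℤ)) = φ i) ∧
  (∀ i : ℕ, i < N → ∀ t ∈ Set.Icc (0:ℝ) T,
    HasDerivWithinAt (φ (i : ℤ))
      ((∑ j ∈ Finset.range N, φ (j : ℤ) t * φ ((N : ℤ) + (i : ℤ) - (j : ℤ)) t) - epsZ ε (i : ℤ))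
      (Set.Icc (0:ℝ) T) t) ∧
  φ 0 T = c ∧ φ 1 T = -c ∧ ∀ i : ℕ, 2 ≤ i → i < N → φ (i : ℤ) T = 0

/-- The discrete Fourier transform of `(φ^j)_{j=0,…,N-1}` at frequency `k`:
`\hatφ^k(t) := ∑_{j=0}^{N-1} φ^j(t) exp(−2π√(−1) jk/N)`. -/
noncomputable def dft (N : ℕ) (φ : ℤ → ℝ → ℝ) (k : ℕ) (t : ℝ) : ℂ :=
  ∑ j ∈ Finset.range N,
    (φ (j : ℤ) t : ℂ) * Complex.exp (-(2 * Real.pi * Complex.I * (j : ℂ) * (k : ℂ)) / (N : ℂ))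

/-!
With `ω = exp (-2πi k/N)`, the transform `a ↦ ∑ a j ω^j` turns cyclic convolution of
`N`-periodic sequences into multiplication, so the quadratic right-hand side of the system becomes
the square of the transform. The forcing `ε (δ₀ - δ₁)` and the terminal data `c (δ₀ - δ₁)`
transform to `(1 - ω) ε` and `(1 - ω) c`.
-/

open Finset Complex

noncomputable def dftKernel (N k : ℕ) (m : ℤ) : ℂ :=
  exp (-(2 * Real.pi * I * m * k) / N)

lemma dftKernel_zero (N k : ℕ) : dftKernel N k 0 = 1 := by
  simp [dftKernel]

lemma dftKernel_add (N k : ℕ) (a b : ℤ) :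
    dftKernel N k (a + b) = dftKernel N k a * dftKernel N k b := by
  rw [dftKernel, dftKernel, dftKernel, ← exp_add]
  push_cast
  ring_nf

lemma dftKernel_periodic {N : ℕ} (hN : N ≠ 0) (k : ℕ) :
    Function.Periodic (dftKernel N k) N := by
  intro m
  have hN' : (N : ℂ) ≠ 0 := Nat.cast_ne_zero.mpr hN
  have hperiod : dftKernel N k N = 1 := by
    rw [dftKernel, show -(2 * Real.pi * I * ((N : ℤ) : ℂ) * k) / N = (-k : ℤ) * (2 * Real.pi * I) by
      push_cast; field_simp]
    exact exp_int_mul_two_pi_mul_I _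
  rw [dftKernel_add, hperiod, mul_one]

theorem Function.Periodic.sum_range_comp_add {M : Type*} [AddCommMonoid M] {f : ℤ → M} {N : ℕ}
    (hf : Function.Periodic f N) (a : ℤ) : ∑ j ∈ range N, f (j + a) = ∑ j ∈ range N, f j := by
  have hstep : ∀ b : ℤ, ∑ j ∈ range N, f (j + (b + 1)) = ∑ j ∈ range N, f (j + b) := by
    intro b
    cases N with
    | zero => simp
    | succ n =>
      rw [sum_range_succ, sum_range_succ', Nat.cast_zero, zero_add, ← hf b]
      push_cast
      simp only [add_assoc, add_comm 1 b, add_comm (n : ℤ) (b + 1), add_comm (1 : ℤ) n]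
  induction a using Int.induction_on with
  | zero => simp
  | succ b ih => rw [hstep, ih]
  | pred b ih => rw [← ih, ← hstep, sub_add_cancel]

noncomputable def dftSeq (N k : ℕ) (a : ℤ → ℂ) : ℂ :=
  ∑ j ∈ range N, a j * dftKernel N k j

def cyclicConv (N : ℕ) (a b : ℤ → ℂ) (i : ℤ) : ℂ :=
  ∑ j ∈ range N, a j * b (N + i - j)

lemma dftSeq_sub (N k : ℕ) (a b : ℤ → ℂ) :
    dftSeq N k (a - b) = dftSeq N k a - dftSeq N k b := by
  simp only [dftSeq, Pi.sub_apply, sub_mul, sum_sub_distrib]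

theorem dftSeq_cyclicConv {N : ℕ} (hN : N ≠ 0) (k : ℕ) (a : ℤ → ℂ) {b : ℤ → ℂ}
    (hb : Function.Periodic b N) :
    dftSeq N k (cyclicConv N a b) = dftSeq N k a * dftSeq N k b := by
  rw [dftSeq, dftSeq, dftSeq, sum_mul_sum]
  simp only [cyclicConv, sum_mul]
  refine sum_comm.trans (sum_congr rfl fun j _ => ?_)
  have hbe : Function.Periodic (fun i => b i * dftKernel N k i) N :=
    fun i => by simp only [hb i, dftKernel_periodic hN k i]
  calc ∑ i ∈ range N, a j * b (N + i - j) * dftKernel N k i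
      = ∑ i ∈ range N, a j * dftKernel N k j * (b (i + (N - j)) * dftKernel N k (i + (N - j))) := by
        refine sum_congr rfl fun i _ => ?_
        rw [← dftKernel_periodic hN k i, show (i : ℤ) + N = j + (i + (N - j)) by ring,
          dftKernel_add, show (N : ℤ) + i - j = i + (N - j) by ring]
        ring
    _ = ∑ i ∈ range N, a j * dftKernel N k j * (b i * dftKernel N k i) := by
        rw [← mul_sum, ← mul_sum, hbe.sum_range_comp_add]

lemma dftSeq_eq_one_sub_dftKernel_one_mul {N : ℕ} (hN : 2 ≤ N) (k : ℕ) {a : ℤ → ℂ} {s : ℂ}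
    (h0 : a 0 = s) (h1 : a 1 = -s) (h : ∀ j : ℕ, 2 ≤ j → j < N → a j = 0) :
    dftSeq N k a = (1 - dftKernel N k 1) * s := by
  have htail : ∑ j ∈ Ico 2 N, a j * dftKernel N k j = 0 := sum_eq_zero fun j hj => by
    obtain ⟨h2j, hjN⟩ := mem_Ico.mp hj
    rw [h j h2j hjN, zero_mul]
  rw [dftSeq, ← sum_range_add_sum_Ico _ hN, htail, add_zero]
  simp only [sum_range_succ, sum_range_zero, Nat.cast_zero, Nat.cast_one, h0, h1, dftKernel_zero]
  ring

lemma hasDerivWithinAt_dftSeq {N : ℕ} (k : ℕ) {f : ℤ → ℝ → ℂ} {f' : ℤ → ℂ} {s : Set ℝ} {t : ℝ}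
    (hf : ∀ j : ℕ, j < N → HasDerivWithinAt (f j) (f' j) s t) :
    HasDerivWithinAt (fun u => dftSeq N k (fun j => f j u)) (dftSeq N k f') s t :=
  HasDerivWithinAt.fun_sum fun j hj => (hf j (mem_range.mp hj)).mul_const _

lemma dft_eq_dftSeq (N : ℕ) (φ : ℤ → ℝ → ℝ) (k : ℕ) (t : ℝ) :
    dft N φ k t = dftSeq N k (fun j => φ j t) := by
  simp [dft, dftSeq, dftKernel]

theorem dft_solves_scalar_riccati_general
    (T ε c : ℝ)
    (N : ℕ) (hN : 2 ≤ N) (φ : ℤ → ℝ → ℝ) (hφ : IsPerRiccatiSol T ε c N φ) :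
    ∀ k : ℕ, k < N →
      (∀ t ∈ Set.Icc (0:ℝ) T,
        HasDerivWithinAt (fun s : ℝ => dft N φ k s)
          ((dft N φ k t) ^ 2 -
            (1 - Complex.exp (-(2 * Real.pi * Complex.I * (k : ℂ)) / (N : ℂ))) * (ε : ℂ))
          (Set.Icc (0:ℝ) T) t) ∧
      dft N φ k T = (1 - Complex.exp (-(2 * Real.pi * Complex.I * (k : ℂ)) / (N : ℂ))) * (c : ℂ) := by
  obtain ⟨hper, hderiv, h0T, h1T, hiT⟩ := hφ
  intro k _
  have hkernel : exp (-(2 * Real.pi * I * k) / N) = dftKernel N k 1 := by simp [dftKernel]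
  simp only [dft_eq_dftSeq, hkernel]
  refine ⟨fun t ht => ?_, dftSeq_eq_one_sub_dftKernel_one_mul hN k (by simp [h0T])
    (by simp [h1T]) fun j h2j hjN => by simp [hiT j h2j hjN]⟩
  have hε : dftSeq N k (fun j => (epsZ ε j : ℂ)) = (1 - dftKernel N k 1) * ε :=
    dftSeq_eq_one_sub_dftKernel_one_mul hN k (by simp [epsZ]) (by simp [epsZ])
      fun j h2j _ => by simp [epsZ, show j ≠ 0 by omega, show (j : ℤ) ≠ 1 by omega]
  have hφt : Function.Periodic (fun j => (φ j t : ℂ)) N := fun i =>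
    congrArg (fun f : ℝ → ℝ => (f t : ℂ)) (hper i)
  rw [sq, ← dftSeq_cyclicConv (by omega) k _ hφt, ← hε, ← dftSeq_sub]
  refine hasDerivWithinAt_dftSeq k fun j hj => ?_
  simpa [cyclicConv] using (hderiv j hj t ht).ofReal_comp

/-- The discrete Fourier transform `\hatφ_N^k` of a solution of the `N`-periodic Riccati
system satisfies the scalar Riccati equation
`(d/dt)\hatφ_N^k(t) = (\hatφ_N^k(t))² − (1 − e^{−2π√(−1)k/N}) ε` on `[0,T]` with terminal
condition `\hatφ_N^k(T) = (1 − e^{−2π√(−1)k/N}) c`. -/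
theorem dft_solves_scalar_riccati
    (T ε c : ℝ) (hT : 0 < T) (hε : 0 < ε) (hc : 0 ≤ c)
    (N : ℕ) (hN : 2 ≤ N) (φ : ℤ → ℝ → ℝ) (hφ : IsPerRiccatiSol T ε c N φ) :
    ∀ k : ℕ, k < N →
      (∀ t ∈ Set.Icc (0:ℝ) T,
        HasDerivWithinAt (fun s : ℝ => dft N φ k s)
          ((dft N φ k t) ^ 2 -
            (1 - Complex.exp (-(2 * Real.pi * Complex.I * (k : ℂ)) / (N : ℂ))) * (ε : ℂ))
          (Set.Icc (0:ℝ) T) t) ∧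
      dft N φ k T = (1 - Complex.exp (-(2 * Real.pi * Complex.I * (k : ℂ)) / (N : ℂ))) * (c : ℂ) :=
  dft_solves_scalar_riccati_general T ε c N hN φ hφ
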